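/- Let MAJ : {0,1}^n × {0,1}^n → {0,1} be the majority function, MAJ(x,y) = 1 if and only if Σ_i x_i y_i ≥ ⌈n/2⌉. MAJ is injective for Bob when restricted to inputs y of Hamming weight at least ⌈n/2⌉ (for any two distinct such y, y' there is an x with MAJ(x,y) ≠ MAJ(x,y')); since there are at least 2^{n−1} such strings y, the garden-hose complexity s = GH(MAJ) satisfies s · log₂(s) ≥ n − 1, hence GH(MAJ) ∈ Ω(n / log n). -/

import Mathlib

/-!
Bob's matching `EB y` must differ on any two inputs `y`, `y'` that some `x` tells apart, since
otherwise the water follows the same path on `(x, y)` and `(x, y')`. A partial matching has no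
loops, so `i ↦ (m i).getD i` encodes it injectively as a self-map of `Fin s`: at most `s ^ s`
inputs can be pairwise told apart. For `MAJ`, two distinct inputs of weight at least `⌈n/2⌉` are
told apart by the indicator of a `⌈n/2⌉`-subset of the support of one of them containing a
coordinate outside the other; and these heavy inputs, together with their complements, cover the
cube, so there are at least `2 ^ (n - 1)` of them. Hence `2 ^ (n - 1) ≤ s ^ s`.
-/

/-- A partial matching on the vertex type `V`, encoded by a partner function:
`m i = some j` means that there is an edge between `i` and `j`;
the graph `{ {i,j} | m i = some j }` then has maximum degree at most `1`
and no self-loops. -/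
def IsPartialMatching {V : Type*} (m : V → Option V) : Prop :=
  ∀ i j, m i = some j → i ≠ j ∧ m j = some i

/-- The position of the water in a garden-hose game with `s` pipes:
`atAlice i` (resp. `atBob i`) means the water has just arrived at Alice's
(resp. Bob's) end of pipe `i`; `exitA` / `exitB` mean the water has exited
on Alice's / Bob's side, i.e. the maximal path starting at the tap has ended
in `A∘` / in `B`. -/
inductive GHState (s : ℕ) where
  | atAlice : Fin s → GHState s
  | atBob : Fin s → GHState s
  | exitA : GHState s
  | exitB : GHState s
  deriving DecidableEq

/-- Vertex `k` of `A∘ = {0, 1, ..., s}` viewed as a pipe: vertex `0` is the water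
tap (no pipe), and vertex `i + 1` is Alice's end of pipe `i`. -/
def toPipe {s : ℕ} (k : Fin (s + 1)) : Option (Fin s) :=
  if h : (k : ℕ) = 0 then none
  else some ⟨(k : ℕ) - 1, by have := k.isLt; omega⟩

/-- One step of the water flow, given Alice's connections `a` on `A∘ = {0,...,s}`
and Bob's connections `b` on `B = {1,...,s}` (indexed by pipes `Fin s`). -/
def ghStep {s : ℕ} (a : Fin (s + 1) → Option (Fin (s + 1)))
    (b : Fin s → Option (Fin s)) : GHState s → GHState s
  | GHState.atAlice i =>
    match a i.succ with
    | none => GHState.exitA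
    | some k =>
      match toPipe k with
      | none => GHState.exitA
      | some p => GHState.atBob p
  | GHState.atBob i =>
    match b i with
    | none => GHState.exitB
    | some j => GHState.atAlice j
  | GHState.exitA => GHState.exitA
  | GHState.exitB => GHState.exitB

/-- The start of the water flow: the tap (vertex `0` of `A∘`) is connected by
Alice to at most one pipe. -/
def ghStart {s : ℕ} (a : Fin (s + 1) → Option (Fin (s + 1))) : GHState s :=
  match a 0 with
  | none => GHState.exitA
  | some k =>
    match toPipe k with
    | none => GHState.exitA
    | some p => GHState.atBob p

/-- The endpoint of the maximal path `π(x,y)` starting at the tap: since the graph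
has maximum degree `2` and the path is simple, it is reached after at most
`2s + 2` steps. -/
def ghResult {s : ℕ} (a : Fin (s + 1) → Option (Fin (s + 1)))
    (b : Fin s → Option (Fin s)) : GHState s :=
  (ghStep a b)^[2 * s + 2] (ghStart a)

/-- A garden-hose game of size `s` on inputs `{0,1}^n × {0,1}^n`: for every input
`x` Alice chooses a partial matching `EA x` on `A∘ = {0,1,…,s}` and for every
input `y` Bob chooses a partial matching `EB y` on `B = {1,…,s}`. -/
structure GHGame (n s : ℕ) where
  EA : (Fin n → Bool) → Fin (s + 1) → Option (Fin (s + 1))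
  EB : (Fin n → Bool) → Fin s → Option (Fin s)
  matchA : ∀ x, IsPartialMatching (EA x)
  matchB : ∀ y, IsPartialMatching (EB y)

/-- Where the water exits on input `(x, y)`. -/
def GHGame.run {n s : ℕ} (G : GHGame n s) (x y : Fin n → Bool) : GHState s :=
  ghResult (G.EA x) (G.EB y)

/-- The game `G` computes `f` if for all inputs the maximal path from the tap ends
in `A∘` whenever `f x y = 0` (water exits on Alice's side) and in `B` whenever
`f x y = 1` (water exits on Bob's side). -/
def GHGame.Computes {n s : ℕ} (G : GHGame n s)
    (f : (Fin n → Bool) → (Fin n → Bool) → Bool) : Prop :=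
  ∀ x y, G.run x y = if f x y then GHState.exitB else GHState.exitA

/-- The garden-hose complexity of `f`: the minimal number of pipes of a
garden-hose game computing `f`. -/
noncomputable def GH {n : ℕ} (f : (Fin n → Bool) → (Fin n → Bool) → Bool) : ℕ :=
  sInf {s : ℕ | ∃ G : GHGame n s, G.Computes f}

/-- The majority function: `MAJ x y = 1` iff `Σ_i x_i y_i ≥ ⌈n/2⌉`. -/
def MAJfun (n : ℕ) (x y : Fin n → Bool) : Bool :=
  decide ((n + 1) / 2 ≤ (Finset.univ.filter fun i => x i = true ∧ y i = true).card)

namespace IsPartialMatching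

variable {V : Type*}

lemma ne_some_self {m : V → Option V} (hm : IsPartialMatching m) (i : V) : m i ≠ some i :=
  fun h => (hm i i h).1 rfl

lemma single_edge [DecidableEq V] {u v : V} (huv : u ≠ v) :
    IsPartialMatching fun w => if w = u then some v else if w = v then some u else none := by
  intro i j h
  by_cases hiu : i = u <;> by_cases hiv : i = v <;> simp_all [eq_comm]

lemma of_involutive {σ : V → V} (hσ : Function.Involutive σ) (hfix : ∀ v, σ v ≠ v)
    {keep : V → Bool} (hkeep : ∀ v, keep (σ v) = keep v) :
    IsPartialMatching fun v => if keep v then some (σ v) else none := by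
  intro i j h
  by_cases hi : keep i <;> simp only [hi, if_true, if_false, Option.some.injEq, reduceCtorEq] at h
  subst h
  exact ⟨(hfix i).symm, by simp [hkeep, hi, hσ i]⟩

end IsPartialMatching

lemma injOn_getD_of_loopFree {V : Type*} :
    Set.InjOn (fun (m : V → Option V) i => (m i).getD i) {m | ∀ i, m i ≠ some i} := by
  intro m hm m' hm' h
  funext i
  have hi := congrFun h i
  cases hmi : m i <;> cases hmi' : m' i <;> simp_all

lemma toPipe_succ {s : ℕ} (i : Fin s) : toPipe i.succ = some i := by
  simp [toPipe]

lemma ghResult_eq_of_iterate_eq {s k : ℕ} {a : Fin (s + 1) → Option (Fin (s + 1))}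
    {b : Fin s → Option (Fin s)} {e : GHState s} (he : ghStep a b e = e) (hk : k ≤ 2 * s + 2)
    (h : (ghStep a b)^[k] (ghStart a) = e) : ghResult a b = e := by
  rw [ghResult, ← Nat.sub_add_cancel hk, Function.iterate_add_apply, h,
    Function.iterate_fixed he]

/-- Every function is computed by some garden-hose game: for each `x` Alice sends the water
through its own pipe `(x, false)`; Bob lets it out if `f x y`, and otherwise returns it
through the twin pipe `(x, true)`, whose end Alice leaves open. -/
lemma exists_ghGame_computes {n : ℕ} (f : (Fin n → Bool) → (Fin n → Bool) → Bool) :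
    ∃ s, ∃ G : GHGame n s, G.Computes f := by
  classical
  let e := Fintype.equivFin ((Fin n → Bool) × Bool)
  let twin : Fin _ → Fin _ := fun p => e ((e.symm p).1, !(e.symm p).2)
  have twin_involutive : Function.Involutive twin := fun p => by simp [twin]
  have twin_ne : ∀ p, twin p ≠ p := fun p h => by
    simpa [twin] using congrArg (·.2) (e.symm_apply_eq.mpr h.symm)
  refine ⟨_, ⟨fun x w => if w = 0 then some (e (x, false)).succ
      else if w = (e (x, false)).succ then some 0 else none,
    fun y p => if !f (e.symm p).1 y then some (twin p) else none,
    fun x => IsPartialMatching.single_edge (Fin.succ_ne_zero _).symm,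
    fun y => IsPartialMatching.of_involutive twin_involutive twin_ne fun p => by simp [twin]⟩,
    fun x y => ?_⟩
  have hne : (e (x, true)).succ ≠ (e (x, false)).succ := by simp
  cases hf : f x y
  · refine ghResult_eq_of_iterate_eq (k := 2) rfl (by omega) ?_
    simp [ghStart, ghStep, toPipe_succ, hf, twin, hne]
  · refine ghResult_eq_of_iterate_eq (k := 1) rfl (by omega) ?_
    simp [ghStart, ghStep, toPipe_succ, hf]

lemma GHGame.Computes.apply_eq_of_EB_eq {n s : ℕ} {G : GHGame n s}
    {f : (Fin n → Bool) → (Fin n → Bool) → Bool} (hG : G.Computes f) {y y' : Fin n → Bool}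
    (h : G.EB y = G.EB y') (x : Fin n → Bool) : f x y = f x y' := by
  have hrun := hG x y
  rw [GHGame.run, h, ← GHGame.run, hG x y'] at hrun
  cases hy : f x y <;> cases hy' : f x y' <;> simp_all

lemma GHGame.Computes.card_le_pow_self {n s : ℕ} {G : GHGame n s}
    {f : (Fin n → Bool) → (Fin n → Bool) → Bool} (hG : G.Computes f)
    {S : Finset (Fin n → Bool)}
    (hS : (S : Set (Fin n → Bool)).Pairwise fun y y' => ∃ x, f x y ≠ f x y') :
    S.card ≤ s ^ s := by
  have hinj : Set.InjOn (fun y i => (G.EB y i).getD i) S := by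
    intro y hy y' hy' h
    by_contra hne
    obtain ⟨x, hx⟩ := hS hy hy' hne
    exact hx (hG.apply_eq_of_EB_eq (injOn_getD_of_loopFree (G.matchB y).ne_some_self
      (G.matchB y').ne_some_self h) x)
  calc S.card ≤ (Finset.univ : Finset (Fin s → Fin s)).card :=
        Finset.card_le_card_of_injOn _ (fun _ _ => Finset.mem_coe.mpr (Finset.mem_univ _)) hinj
    _ = s ^ s := by simp

open Finset in
lemma exists_threshold_separating {n k : ℕ} {y y' : Fin n → Bool} {i : Fin n} (hk : 1 ≤ k)
    (hy : k ≤ #{j | y j = true}) (hi : y i = true) (hi' : y' i = false) :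
    ∃ x : Fin n → Bool,
      k ≤ #{j | x j = true ∧ y j = true} ∧ #{j | x j = true ∧ y' j = true} < k := by
  obtain ⟨S, hiS, hSy, hS⟩ :=
    exists_subsuperset_card_eq (s := {i}) (by simpa using hi) (by simpa) hy
  refine ⟨fun j => decide (j ∈ S), ?_, ?_⟩
  · have hfilter : ({j | decide (j ∈ S) = true ∧ y j = true} : Finset (Fin n)) = S := by
      ext j
      simpa using fun hj => (mem_filter.mp (hSy hj)).2
    rw [hfilter, hS]
  · have hsub :
        ({j | decide (j ∈ S) = true ∧ y' j = true} : Finset (Fin n)) ⊆ S.erase i := by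
      intro j
      simp only [mem_filter, mem_univ, true_and, decide_eq_true_eq, mem_erase]
      rintro ⟨hjS, hj⟩
      exact ⟨by rintro rfl; simp_all, hjS⟩
    calc _ ≤ #(S.erase i) := card_le_card hsub
      _ < k := by rw [card_erase_of_mem (by simpa using hiS), hS]; omega

open Finset in
lemma MAJfun_separates {n : ℕ} {y y' : Fin n → Bool} (hy : (n + 1) / 2 ≤ #{i | y i = true})
    (hy' : (n + 1) / 2 ≤ #{i | y' i = true}) (hne : y ≠ y') :
    ∃ x, MAJfun n x y ≠ MAJfun n x y' := by
  suffices key : ∀ y y' : Fin n → Bool, (n + 1) / 2 ≤ #{i | y i = true} →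
      ∀ i, y i = true → y' i = false → ∃ x, MAJfun n x y ≠ MAJfun n x y' by
    obtain ⟨i, hi⟩ := Function.ne_iff.mp hne
    cases hyi : y i
    · obtain ⟨x, hx⟩ := key y' y hy' i (by simpa [hyi] using hi.symm) hyi
      exact ⟨x, hx.symm⟩
    · exact key y y' hy i hyi (by simpa [hyi] using hi.symm)
  intro y y' hy i hi hi'
  obtain ⟨x, hxy, hxy'⟩ := exists_threshold_separating (by have := i.pos; omega) hy hi hi'
  exact ⟨x, by simp [MAJfun, hxy, hxy']⟩

open Finset in
lemma two_pow_le_two_mul_card_heavy (n : ℕ) :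
    2 ^ n ≤ 2 * #{y : Fin n → Bool | (n + 1) / 2 ≤ #{i | y i = true}} := by
  set H := ({y : Fin n → Bool | (n + 1) / 2 ≤ #{i | y i = true}} : Finset _)
  have hcover : univ ⊆ H ∪ H.image (fun (y : Fin n → Bool) i => !y i) := by
    intro y _
    by_cases hy : y ∈ H
    · exact mem_union_left _ hy
    refine mem_union_right _ (mem_image.mpr ⟨fun i => !y i, ?_, by simp⟩)
    have := card_filter_add_card_filter_not (s := univ) fun i => y i = true
    simp_all [H]
    omega
  calc 2 ^ n = #(univ : Finset (Fin n → Bool)) := by simp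
    _ ≤ #H + #(H.image fun y i => !y i) := (card_le_card hcover).trans (card_union_le _ _)
    _ ≤ #H + #H := by grw [card_image_le]
    _ = 2 * #H := by ring

lemma exists_ghGame_GH_computes {n : ℕ} (f : (Fin n → Bool) → (Fin n → Bool) → Bool) :
    ∃ G : GHGame n (GH f), G.Computes f :=
  Nat.sInf_mem (exists_ghGame_computes f)

lemma sub_one_le_mul_logb_of_two_pow_le {n s : ℕ} (h : 2 ^ n ≤ 2 * s ^ s) :
    (n : ℝ) - 1 ≤ s * Real.logb 2 s := by
  have hR : (2 : ℝ) ^ n ≤ 2 * (s : ℝ) ^ s := by exact_mod_cast h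
  have hpos : (0 : ℝ) < (s : ℝ) ^ s := by linarith [pow_pos two_pos n (M₀ := ℝ)]
  have hlog := Real.logb_le_logb_of_le one_lt_two (by positivity) hR
  rw [Real.logb_pow, Real.logb_mul two_ne_zero hpos.ne', Real.logb_pow,
    Real.logb_self_eq_one one_lt_two] at hlog
  linarith

lemma half_div_logb_le_of_sub_one_le_mul_logb {m s : ℝ} (hm : 2 ≤ m) (hs : 0 ≤ s)
    (h : m - 1 ≤ s * Real.logb 2 s) : 1 / 2 * (m / Real.logb 2 m) ≤ s := by
  have hlogm : 1 ≤ Real.logb 2 m := by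
    rw [← Real.logb_self_eq_one one_lt_two]
    exact Real.logb_le_logb_of_le one_lt_two two_pos hm
  rw [show 1 / 2 * (m / Real.logb 2 m) = m / (2 * Real.logb 2 m) by ring,
    div_le_iff₀ (by positivity)]
  rcases le_or_gt s m with hsm | hms
  · have hs0 : 0 < s := hs.lt_of_ne (by rintro rfl; simp at h; linarith)
    have hlogs := Real.logb_le_logb_of_le one_lt_two hs0 hsm
    nlinarith
  · nlinarith

/-- `MAJ` is injective for Bob when restricted to inputs `y` of Hamming weight
at least `⌈n/2⌉`, and the garden-hose complexity `s = GH(MAJ)` satisfies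
`s · log₂ s ≥ n - 1`; hence `GH(MAJ) ∈ Ω(n / log n)`. -/
theorem gh_maj_lower_bound (n : ℕ) :
    (∀ y y' : Fin n → Bool,
      (n + 1) / 2 ≤ (Finset.univ.filter fun i => y i = true).card →
      (n + 1) / 2 ≤ (Finset.univ.filter fun i => y' i = true).card →
      y ≠ y' → ∃ x, MAJfun n x y ≠ MAJfun n x y') ∧
    (n : ℝ) - 1 ≤ (GH (MAJfun n) : ℝ) * Real.logb 2 (GH (MAJfun n)) ∧
    ∃ C : ℝ, 0 < C ∧ ∀ m : ℕ, 2 ≤ m →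
      C * ((m : ℝ) / Real.logb 2 m) ≤ (GH (MAJfun m) : ℝ) := by
  have hbound (m : ℕ) : (m : ℝ) - 1 ≤ GH (MAJfun m) * Real.logb 2 (GH (MAJfun m)) := by
    obtain ⟨G, hG⟩ := exists_ghGame_GH_computes (MAJfun m)
    refine sub_one_le_mul_logb_of_two_pow_le ((two_pow_le_two_mul_card_heavy m).trans ?_)
    gcongr
    exact hG.card_le_pow_self fun y hy y' hy' hne =>
      MAJfun_separates (by simpa using hy) (by simpa using hy') hne
  exact ⟨fun _ _ => MAJfun_separates, hbound n, 1 / 2, by norm_num, fun m hm =>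
    half_div_logb_le_of_sub_one_le_mul_logb (by exact_mod_cast hm) (Nat.cast_nonneg _) (hbound m)⟩
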